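/- Let Ω ⊂ ℝⁿ be open, {a_i}_{i=1}^l distinct points in Ω, and ρ_a := min({½|a_i−a_j| : i≠j} ∪ {dist(a_i,∂Ω) : i} ∪ {1}). Suppose {ξ_i}_{i=1}^l ⊂ Ω and d_1,…,d_l ∈ {±1} satisfy ‖Σ_i d_i(δ_{a_i} − δ_{ξ_i})‖_{W^{-1,1}(Ω)} ≤ ρ_a/4. Then after possibly relabelling the ξ_i, one has ‖Σ_i d_i(δ_{a_i} − δ_{ξ_i})‖_{W^{-1,1}(Ω)} = Σ_{i=1}^l |a_i − ξ_i|. -/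

import Mathlib

/-!
Test the dipole functional `μ = Σ d_i (δ_{a_i} - δ_{ξ_i})` against the tents
`(r - |x - a_i|)⁺`, where the closed balls `B(a_i, r)` lie in `Ω` and are `2r` apart. Since `±` a
tent is admissible, `|d_i r - Σ_j d_j (r - |ξ_j - a_i|)⁺| ≤ ‖μ‖`; when `‖μ‖ < r` some term
`d_i d_j (r - |ξ_j - a_i|)⁺` must be positive, i.e. a `ξ_j` of the same sign lies in `B(a_i, r)`.
The balls being disjoint, this matching is a sign-preserving permutation `σ`. Every admissible
test function is 1-Lipschitz, so `‖μ‖ ≤ Σ_i |a_i - ξ_{σ i}|`, and the signed sum of tents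
`Σ_i d_i (r - |x - a_i|)⁺` is admissible and attains this value. The hypothesis `‖μ‖ ≤ ρ_a / 4`
makes `r = ρ_a / 2` a valid radius.
-/

open Metric Set

/-- The `W^{-1,1}(Ω)` norm of a linear functional `pair` on Lipschitz test functions:
the supremum of pairings against `φ ∈ W₀^{1,∞}(Ω)` with `max(‖φ‖_∞, ‖∇φ‖_∞) ≤ 1`. -/
noncomputable def W11norm {n : ℕ} (Ω : Set (EuclideanSpace ℝ (Fin n)))
    (pair : (EuclideanSpace ℝ (Fin n) → ℝ) → ℝ) : ℝ :=
  sSup {s | ∃ φ : EuclideanSpace ℝ (Fin n) → ℝ,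
    LipschitzWith 1 φ ∧ (∀ x, |φ x| ≤ 1) ∧ tsupport φ ⊆ Ω ∧ s = pair φ}

section TestFunction

variable {E : Type*} [PseudoMetricSpace E]

def IsTestFunction (Ω : Set E) (φ : E → ℝ) : Prop :=
  LipschitzWith 1 φ ∧ (∀ x, |φ x| ≤ 1) ∧ tsupport φ ⊆ Ω

theorem isTestFunction_zero (Ω : Set E) : IsTestFunction Ω 0 :=
  ⟨LipschitzWith.const' 0, by simp, by simp⟩

theorem IsTestFunction.neg {Ω : Set E} {φ : E → ℝ} (hφ : IsTestFunction Ω φ) :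
    IsTestFunction Ω (-φ) :=
  ⟨hφ.1.neg, fun x => by simpa using hφ.2.1 x, by simpa [tsupport_neg] using hφ.2.2⟩

end TestFunction

section W11norm

variable {n : ℕ} {Ω : Set (EuclideanSpace ℝ (Fin n))}
  {pair : (EuclideanSpace ℝ (Fin n) → ℝ) → ℝ} {C : ℝ}

theorem W11norm_le (h : ∀ φ, IsTestFunction Ω φ → pair φ ≤ C) : W11norm Ω pair ≤ C := by
  obtain ⟨h₁, h₂, h₃⟩ := isTestFunction_zero Ω
  exact csSup_le ⟨_, 0, h₁, h₂, h₃, rfl⟩ fun _ ⟨φ, h₁, h₂, h₃, hs⟩ => hs ▸ h φ ⟨h₁, h₂, h₃⟩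

theorem le_W11norm (h : ∀ φ, IsTestFunction Ω φ → pair φ ≤ C)
    {φ : EuclideanSpace ℝ (Fin n) → ℝ} (hφ : IsTestFunction Ω φ) : pair φ ≤ W11norm Ω pair :=
  le_csSup ⟨C, fun _ ⟨ψ, h₁, h₂, h₃, hs⟩ => hs ▸ h ψ ⟨h₁, h₂, h₃⟩⟩
    ⟨φ, hφ.1, hφ.2.1, hφ.2.2, rfl⟩

end W11norm

section Tent

variable {E : Type*} [PseudoMetricSpace E]

def tent (p : E) (r : ℝ) (x : E) : ℝ :=
  max (r - dist x p) 0

theorem tent_nonneg (p : E) (r : ℝ) (x : E) : 0 ≤ tent p r x :=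
  le_max_right _ _

theorem tent_le (p : E) {r : ℝ} (hr : 0 ≤ r) (x : E) : tent p r x ≤ r :=
  max_le (by linarith [dist_nonneg (x := x) (y := p)]) hr

theorem tent_self (p : E) {r : ℝ} (hr : 0 ≤ r) : tent p r p = r := by
  simp [tent, hr]

theorem tent_of_dist_le {p x : E} {r : ℝ} (h : dist x p ≤ r) : tent p r x = r - dist x p :=
  max_eq_left (by linarith)

theorem tent_of_le_dist {p x : E} {r : ℝ} (h : r ≤ dist x p) : tent p r x = 0 :=
  max_eq_right (by linarith)

theorem tent_pos_iff {p x : E} {r : ℝ} : 0 < tent p r x ↔ dist x p < r := by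
  simp [tent]

theorem lipschitzWith_tent (p : E) (r : ℝ) : LipschitzWith 1 (tent p r) :=
  LipschitzWith.of_dist_le_mul fun x y => by
    rw [NNReal.coe_one, one_mul, Real.dist_eq]
    calc |tent p r x - tent p r y| ≤ |(r - dist x p) - (r - dist y p)| :=
          abs_max_sub_max_le_abs _ _ _
      _ = |dist y p - dist x p| := by congr 1; ring
      _ ≤ dist y x := abs_dist_sub_le _ _ _
      _ = dist x y := dist_comm _ _

theorem support_tent_subset (p : E) (r : ℝ) : Function.support (tent p r) ⊆ closedBall p r :=
  fun _ hx => (tent_pos_iff.1 ((tent_nonneg _ _ _).lt_of_ne' hx)).le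

theorem isTestFunction_tent {Ω : Set E} {p : E} {r : ℝ} (hr₀ : 0 ≤ r) (hr₁ : r ≤ 1)
    (hΩ : closedBall p r ⊆ Ω) : IsTestFunction Ω (tent p r) :=
  ⟨lipschitzWith_tent p r,
    fun x => by rw [abs_of_nonneg (tent_nonneg p r x)]; exact (tent_le p hr₀ x).trans hr₁,
    (closure_minimal (support_tent_subset p r) isClosed_closedBall).trans hΩ⟩

theorem tent_add_tent_le_dist {p q x y : E} {r : ℝ} (hpq : 2 * r ≤ dist p q)
    (hx : tent q r x = 0) (hy : tent p r y = 0) : tent p r x + tent q r y ≤ dist x y := by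
  have hxq : r ≤ dist x q := by by_contra h; linarith [tent_pos_iff.2 (not_le.1 h)]
  have hyp : r ≤ dist y p := by by_contra h; linarith [tent_pos_iff.2 (not_le.1 h)]
  have h₁ := dist_triangle p x y
  have h₂ := dist_triangle p y q
  have h₃ := dist_triangle x y q
  have h₄ := dist_nonneg (x := x) (y := y)
  simp only [dist_comm p x, dist_comm p y, dist_comm p q] at *
  unfold tent
  rcases max_cases (r - dist x p) 0 with ⟨h, _⟩ | ⟨h, _⟩ <;>
    rcases max_cases (r - dist y q) 0 with ⟨h', _⟩ | ⟨h', _⟩ <;>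
    rw [h, h'] <;> linarith

end Tent

section SumTent

variable {E ι : Type*} [PseudoMetricSpace E] {a : ι → E} {r : ℝ}

theorem tent_eq_zero_of_tent_pos (hsep : ∀ i j, i ≠ j → 2 * r ≤ dist (a i) (a j)) {i j : ι}
    (hij : i ≠ j) {x : E} (hx : 0 < tent (a i) r x) : tent (a j) r x = 0 := by
  refine tent_of_le_dist (le_of_not_gt fun hxj => ?_)
  have := dist_triangle_left (a i) (a j) x
  linarith [hsep i j hij, tent_pos_iff.1 hx]

theorem exists_forall_ne_tent_eq_zero [Nonempty ι]
    (hsep : ∀ i j, i ≠ j → 2 * r ≤ dist (a i) (a j)) (x : E) :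
    ∃ i, ∀ k, k ≠ i → tent (a k) r x = 0 := by
  by_cases h : ∃ i, 0 < tent (a i) r x
  · obtain ⟨i, hi⟩ := h
    exact ⟨i, fun k hk => tent_eq_zero_of_tent_pos hsep hk.symm hi⟩
  · simp only [not_exists, not_lt] at h
    exact ⟨Classical.arbitrary ι, fun k _ => (h k).antisymm (tent_nonneg _ _ _)⟩

variable [Fintype ι]

theorem sum_mul_tent_eq (c : ι → ℝ) {i : ι} {x : E}
    (hx : ∀ k, k ≠ i → tent (a k) r x = 0) :
    ∑ k, c k * tent (a k) r x = c i * tent (a i) r x :=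
  Finset.sum_eq_single_of_mem i (Finset.mem_univ i) fun k _ hk => by rw [hx k hk, mul_zero]

theorem lipschitzWith_sum_mul_tent {c : ι → ℝ} (hc : ∀ k, |c k| ≤ 1)
    (hsep : ∀ i j, i ≠ j → 2 * r ≤ dist (a i) (a j)) :
    LipschitzWith 1 fun x => ∑ k, c k * tent (a k) r x := by
  cases isEmpty_or_nonempty ι
  · simpa using LipschitzWith.const' (0 : ℝ)
  refine LipschitzWith.of_dist_le_mul fun x y => ?_
  rw [NNReal.coe_one, one_mul, Real.dist_eq]
  obtain ⟨i, hi⟩ := exists_forall_ne_tent_eq_zero hsep x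
  obtain ⟨j, hj⟩ := exists_forall_ne_tent_eq_zero hsep y
  rw [sum_mul_tent_eq c hi, sum_mul_tent_eq c hj]
  obtain rfl | hij := eq_or_ne i j
  · rw [← mul_sub, abs_mul, ← Real.dist_eq]
    exact (mul_le_of_le_one_left dist_nonneg (hc i)).trans
      (by simpa using (lipschitzWith_tent (a i) r).dist_le_mul x y)
  calc |c i * tent (a i) r x - c j * tent (a j) r y|
      ≤ |c i * tent (a i) r x| + |c j * tent (a j) r y| := abs_sub _ _
    _ ≤ tent (a i) r x + tent (a j) r y := by
        rw [abs_mul, abs_mul, abs_of_nonneg (tent_nonneg _ _ x),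
          abs_of_nonneg (tent_nonneg _ _ y)]
        gcongr
        · exact mul_le_of_le_one_left (tent_nonneg _ _ _) (hc i)
        · exact mul_le_of_le_one_left (tent_nonneg _ _ _) (hc j)
    _ ≤ dist x y := tent_add_tent_le_dist (hsep i j hij) (hi j hij.symm) (hj i hij)

theorem isTestFunction_sum_mul_tent {Ω : Set E} {c : ι → ℝ} (hc : ∀ k, |c k| ≤ 1)
    (hr₀ : 0 ≤ r) (hr₁ : r ≤ 1) (hsep : ∀ i j, i ≠ j → 2 * r ≤ dist (a i) (a j))
    (hΩ : ∀ k, closedBall (a k) r ⊆ Ω) :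
    IsTestFunction Ω fun x => ∑ k, c k * tent (a k) r x := by
  refine ⟨lipschitzWith_sum_mul_tent hc hsep, fun x => ?_, ?_⟩
  · cases isEmpty_or_nonempty ι
    · simp
    beta_reduce
    obtain ⟨i, hi⟩ := exists_forall_ne_tent_eq_zero hsep x
    rw [sum_mul_tent_eq c hi, abs_mul, abs_of_nonneg (tent_nonneg _ _ _)]
    exact mul_le_one₀ (hc i) (tent_nonneg _ _ _) ((tent_le _ hr₀ x).trans hr₁)
  · refine closure_minimal (fun x hx => ?_) (isClosed_iUnion_of_finite fun k =>
      isClosed_closedBall (x := a k) (ε := r)) |>.trans (iUnion_subset hΩ)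
    obtain ⟨k, -, hk⟩ := Finset.exists_ne_zero_of_sum_ne_zero hx
    exact mem_iUnion.2 ⟨k, support_tent_subset _ _ (right_ne_zero_of_mul hk)⟩

end SumTent

section DipolePairing

variable {E ι : Type*} [Fintype ι] {d : ι → ℝ} {a ξ : ι → E}

def dipolePairing (d : ι → ℝ) (a ξ : ι → E) (φ : E → ℝ) : ℝ :=
  ∑ i, d i * (φ (a i) - φ (ξ i))

theorem dipolePairing_zero : dipolePairing d a ξ 0 = 0 := by
  simp [dipolePairing]

theorem dipolePairing_neg (φ : E → ℝ) :
    dipolePairing d a ξ (-φ) = -dipolePairing d a ξ φ := by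
  simp only [dipolePairing, Pi.neg_apply, ← Finset.sum_neg_distrib]
  exact Finset.sum_congr rfl fun i _ => by ring

theorem dipolePairing_comp_perm (σ : Equiv.Perm ι) (hσ : ∀ i, d (σ i) = d i) :
    dipolePairing d a (fun i => ξ (σ i)) = dipolePairing d a ξ := by
  ext φ
  simp only [dipolePairing, mul_sub, Finset.sum_sub_distrib]
  rw [← Equiv.sum_comp σ fun i => d i * φ (ξ i)]
  simp only [hσ]

variable [PseudoMetricSpace E]

theorem dipolePairing_le_sum_dist (hd : ∀ i, |d i| ≤ 1) {φ : E → ℝ}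
    (hφ : LipschitzWith 1 φ) : dipolePairing d a ξ φ ≤ ∑ i, dist (a i) (ξ i) := by
  refine Finset.sum_le_sum fun i _ => ?_
  calc d i * (φ (a i) - φ (ξ i)) ≤ |d i| * |φ (a i) - φ (ξ i)| := by
        rw [← abs_mul]; exact le_abs_self _
    _ ≤ |φ (a i) - φ (ξ i)| := mul_le_of_le_one_left (abs_nonneg _) (hd i)
    _ ≤ dist (a i) (ξ i) := by simpa [Real.dist_eq] using hφ.dist_le_mul (a i) (ξ i)

theorem dipolePairing_tent {i : ι} {r : ℝ} (hr : 0 ≤ r)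
    (hsep : ∀ j, j ≠ i → r ≤ dist (a j) (a i)) :
    dipolePairing d a ξ (tent (a i) r) = d i * r - ∑ j, d j * tent (a i) r (ξ j) := by
  simp only [dipolePairing, mul_sub, Finset.sum_sub_distrib]
  rw [Finset.sum_eq_single_of_mem i (Finset.mem_univ i)
    (fun j _ hj => by rw [tent_of_le_dist (hsep j hj), mul_zero]), tent_self _ hr]

theorem dipolePairing_sum_mul_tent (hd : ∀ i, d i * d i = 1) {r : ℝ}
    (hsep : ∀ i j, i ≠ j → 2 * r ≤ dist (a i) (a j)) (hξ : ∀ i, dist (ξ i) (a i) < r) :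
    dipolePairing d a ξ (fun x => ∑ k, d k * tent (a k) r x) = ∑ i, dist (a i) (ξ i) := by
  refine Finset.sum_congr rfl fun i _ => ?_
  have hr : 0 < r := dist_nonneg.trans_lt (hξ i)
  have hsingle : ∀ x, 0 < tent (a i) r x →
      ∑ k, d k * tent (a k) r x = d i * tent (a i) r x :=
    fun x hx => sum_mul_tent_eq d fun k hk => tent_eq_zero_of_tent_pos hsep hk.symm hx
  beta_reduce
  rw [hsingle _ (tent_pos_iff.2 (by simpa using hr)), hsingle _ (tent_pos_iff.2 (hξ i)),
    tent_self _ hr.le, tent_of_dist_le (hξ i).le, ← mul_sub, ← mul_assoc, hd i, dist_comm]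
  ring

end DipolePairing

theorem exists_perm_forall_dist_lt {E ι : Type*} [PseudoMetricSpace E] [Finite ι]
    {a ξ : ι → E} {r : ℝ} (hsep : ∀ i j, i ≠ j → 2 * r ≤ dist (a i) (a j))
    {p : ι → ι → Prop} (h : ∀ i, ∃ j, dist (ξ j) (a i) < r ∧ p i j) :
    ∃ σ : Equiv.Perm ι, ∀ i, dist (ξ (σ i)) (a i) < r ∧ p i (σ i) := by
  choose g hg using h
  have hg_inj : Function.Injective g := fun i i' hii' => by
    by_contra hne
    have hi' : dist (ξ (g i)) (a i') < r := hii' ▸ (hg i').1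
    have := dist_triangle_left (a i) (a i') (ξ (g i))
    linarith [hsep i i' hne, (hg i).1]
  exact ⟨Equiv.ofBijective g (Finite.injective_iff_bijective.1 hg_inj), hg⟩

def IsAdmissibleRadius {E ι : Type*} [PseudoMetricSpace E] (Ω : Set E) (a : ι → E) (r : ℝ) :
    Prop :=
  r ≤ 1 ∧ (∀ i j, i ≠ j → 2 * r ≤ dist (a i) (a j)) ∧ ∀ i, closedBall (a i) r ⊆ Ω

section Dipoles

variable {n : ℕ} {Ω : Set (EuclideanSpace ℝ (Fin n))} {ι : Type*} [Fintype ι] {d : ι → ℝ}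
  {a ξ : ι → EuclideanSpace ℝ (Fin n)} {r : ℝ}

theorem W11norm_dipolePairing_le (hd : ∀ i, |d i| ≤ 1) :
    W11norm Ω (dipolePairing d a ξ) ≤ ∑ i, dist (a i) (ξ i) :=
  W11norm_le fun _ hφ => dipolePairing_le_sum_dist hd hφ.1

theorem le_W11norm_dipolePairing (hd : ∀ i, |d i| ≤ 1) {φ : EuclideanSpace ℝ (Fin n) → ℝ}
    (hφ : IsTestFunction Ω φ) : dipolePairing d a ξ φ ≤ W11norm Ω (dipolePairing d a ξ) :=
  le_W11norm (fun _ hψ => dipolePairing_le_sum_dist hd hψ.1) hφ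

theorem W11norm_dipolePairing_nonneg (hd : ∀ i, |d i| ≤ 1) :
    0 ≤ W11norm Ω (dipolePairing d a ξ) :=
  dipolePairing_zero (d := d) (a := a) (ξ := ξ) ▸
    le_W11norm_dipolePairing hd (isTestFunction_zero Ω)

theorem abs_dipolePairing_le_W11norm (hd : ∀ i, |d i| ≤ 1) {φ : EuclideanSpace ℝ (Fin n) → ℝ}
    (hφ : IsTestFunction Ω φ) : |dipolePairing d a ξ φ| ≤ W11norm Ω (dipolePairing d a ξ) :=
  abs_le'.2 ⟨le_W11norm_dipolePairing hd hφ,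
    dipolePairing_neg (d := d) (a := a) (ξ := ξ) φ ▸ le_W11norm_dipolePairing hd hφ.neg⟩

theorem exists_dist_lt_of_W11norm_lt (hd : ∀ i, d i = 1 ∨ d i = -1)
    (hr : IsAdmissibleRadius Ω a r) (hN : W11norm Ω (dipolePairing d a ξ) < r) (i : ι) :
    ∃ j, dist (ξ j) (a i) < r ∧ d j = d i := by
  have hd_abs : ∀ k, |d k| = 1 := fun k => by rcases hd k with h | h <;> simp [h]
  have hd_sq : d i * d i = 1 := by rcases hd i with h | h <;> simp [h]
  have hr₀ : 0 ≤ r := (W11norm_dipolePairing_nonneg fun k => (hd_abs k).le).trans hN.le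
  set S := ∑ j, d j * tent (a i) r (ξ j)
  have htest : |d i * r - S| ≤ W11norm Ω (dipolePairing d a ξ) := by
    rw [← dipolePairing_tent hr₀ fun j hj => by linarith [hr.2.1 j i hj]]
    exact abs_dipolePairing_le_W11norm (fun k => (hd_abs k).le)
      (isTestFunction_tent hr₀ hr.1 (hr.2.2 i))
  have hS : 0 < ∑ j, d i * d j * tent (a i) r (ξ j) := by
    have hrS : |r - d i * S| ≤ W11norm Ω (dipolePairing d a ξ) := by
      rwa [show r - d i * S = d i * (d i * r - S) by rw [mul_sub, ← mul_assoc, hd_sq, one_mul],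
        abs_mul, hd_abs, one_mul]
    simp only [mul_assoc, ← Finset.mul_sum]
    linarith [(abs_le.1 hrS).2]
  obtain ⟨j, -, hj⟩ := Finset.exists_lt_of_sum_lt (f := fun _ => (0 : ℝ)) (by simpa using hS)
  have htent := (tent_nonneg (a i) r (ξ j)).lt_of_ne' fun h => by simp [h] at hj
  refine ⟨j, tent_pos_iff.1 htent, ?_⟩
  have hsign := pos_of_mul_pos_left hj htent.le
  rcases hd i with h | h <;> rcases hd j with h' | h' <;> rw [h, h'] at hsign ⊢ <;>
    norm_num at hsign

theorem W11norm_dipolePairing_eq_of_lt (hd : ∀ i, d i = 1 ∨ d i = -1)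
    (hr : IsAdmissibleRadius Ω a r) (hN : W11norm Ω (dipolePairing d a ξ) < r) :
    ∃ σ : Equiv.Perm ι, W11norm Ω (dipolePairing d a ξ) = ∑ i, dist (a i) (ξ (σ i)) := by
  have hd_abs : ∀ k, |d k| ≤ 1 := fun k => by rcases hd k with h | h <;> simp [h]
  have hd_sq : ∀ k, d k * d k = 1 := fun k => by rcases hd k with h | h <;> simp [h]
  have hr₀ : 0 ≤ r := (W11norm_dipolePairing_nonneg hd_abs).trans hN.le
  obtain ⟨σ, hσ⟩ := exists_perm_forall_dist_lt hr.2.1 (exists_dist_lt_of_W11norm_lt hd hr hN)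
  refine ⟨σ, ?_⟩
  rw [← dipolePairing_comp_perm σ fun i => (hσ i).2]
  refine (W11norm_dipolePairing_le hd_abs).antisymm ?_
  rw [← dipolePairing_sum_mul_tent hd_sq hr.2.1 fun i => (hσ i).1]
  exact le_W11norm_dipolePairing hd_abs
    (isTestFunction_sum_mul_tent hd_abs hr₀ hr.1 hr.2.1 hr.2.2)

end Dipoles

section Radius

variable {E ι : Type*}

def separationSet [PseudoMetricSpace E] (Ω : Set E) (a : ι → E) : Set ℝ :=
  {x | ∃ i j, i ≠ j ∧ x = dist (a i) (a j) / 2} ∪ {x | ∃ i, x = infDist (a i) Ωᶜ} ∪ {1}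

noncomputable def separationRadius [PseudoMetricSpace E] (Ω : Set E) (a : ι → E) : ℝ :=
  sInf (separationSet Ω a)

theorem isAdmissibleRadius_of_lt_separationRadius [PseudoMetricSpace E] {Ω : Set E}
    {a : ι → E} {r : ℝ} (hr : r < separationRadius Ω a) : IsAdmissibleRadius Ω a r := by
  have hbdd : BddBelow (separationSet Ω a) := ⟨0, by
    rintro x ((⟨i, j, -, rfl⟩ | ⟨i, rfl⟩) | rfl)
    exacts [by positivity, infDist_nonneg, zero_le_one]⟩
  have hlt : ∀ x ∈ separationSet Ω a, r < x := fun x hx => hr.trans_le (csInf_le hbdd hx)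
  refine ⟨(hlt 1 (Or.inr rfl)).le,
    fun i j hij => by linarith [hlt _ (Or.inl (Or.inl ⟨i, j, hij, rfl⟩))], fun i x hx => ?_⟩
  by_contra hxΩ
  have := infDist_le_dist_of_mem (x := a i) (show x ∈ Ωᶜ from hxΩ)
  rw [mem_closedBall, dist_comm] at hx
  linarith [hlt _ (Or.inl (Or.inr ⟨i, rfl⟩))]

open Filter Topology in
theorem eventually_isAdmissibleRadius [MetricSpace E] [Finite ι] {Ω : Set E} (hΩ : IsOpen Ω)
    {a : ι → E} (ha : Function.Injective a) (haΩ : ∀ i, a i ∈ Ω) :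
    ∀ᶠ r in 𝓝 (0 : ℝ), IsAdmissibleRadius Ω a r := by
  refine (eventually_le_nhds one_pos).and <|
    (eventually_all.2 fun i => eventually_all.2 fun j => ?_).and
      (eventually_all.2 fun i => eventually_closedBall_subset (hΩ.mem_nhds (haΩ i)))
  by_cases hij : i = j
  · exact .of_forall fun _ hne => absurd hij hne
  · filter_upwards [eventually_le_nhds (half_pos (dist_pos.2 (ha.ne hij)))] with r hr _
    linarith

end Radius

theorem stmt0_general {n l : ℕ} (Ω : Set (EuclideanSpace ℝ (Fin n))) (hΩ : IsOpen Ω)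
    (a ξ : Fin l → EuclideanSpace ℝ (Fin n)) (ha : Function.Injective a)
    (haΩ : ∀ i, a i ∈ Ω)
    (d : Fin l → ℝ) (hd : ∀ i, d i = 1 ∨ d i = -1)
    (ρa : ℝ)
    (hρa : ρa = sInf (({x | ∃ i j, i ≠ j ∧ x = dist (a i) (a j) / 2} ∪
      {x | ∃ i, x = infDist (a i) Ωᶜ} ∪ {1}) : Set ℝ))
    (hsmall : W11norm Ω (fun φ => ∑ i, d i * (φ (a i) - φ (ξ i))) ≤ ρa / 4) :
    ∃ σ : Equiv.Perm (Fin l),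
      W11norm Ω (fun φ => ∑ i, d i * (φ (a i) - φ (ξ i))) =
        ∑ i, dist (a i) (ξ (σ i)) := by
  change ρa = separationRadius Ω a at hρa
  change W11norm Ω (dipolePairing d a ξ) ≤ ρa / 4 at hsmall
  obtain ⟨r, hr, hNr⟩ : ∃ r, IsAdmissibleRadius Ω a r ∧ W11norm Ω (dipolePairing d a ξ) < r := by
    rcases lt_or_ge 0 ρa with hρ | hρ
    · exact ⟨ρa / 2, isAdmissibleRadius_of_lt_separationRadius (by linarith), by linarith⟩
    -- `infDist (a i) ∅ = 0`, so `ρa = 0` when `Ω = univ`; then the norm vanishes and any small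
    -- radius will do.
    · obtain ⟨r, hr, hr₀⟩ := ((eventually_isAdmissibleRadius hΩ ha haΩ).filter_mono
        nhdsWithin_le_nhds).and (self_mem_nhdsWithin (s := Ioi 0)) |>.exists
      exact ⟨r, hr, by linarith⟩
  exact W11norm_dipolePairing_eq_of_lt hd hr hNr

/-- Lemma 2.1: if `‖Σ d_i (δ_{a_i} - δ_{ξ_i})‖_{W^{-1,1}} ≤ ρ_a/4` then, after relabelling
the points `ξ_i`, the norm equals `Σ |a_i - ξ_i|`. -/
theorem stmt0 {n l : ℕ} (hl : 0 < l) (Ω : Set (EuclideanSpace ℝ (Fin n))) (hΩ : IsOpen Ω)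
    (a ξ : Fin l → EuclideanSpace ℝ (Fin n)) (ha : Function.Injective a)
    (haΩ : ∀ i, a i ∈ Ω) (hξΩ : ∀ i, ξ i ∈ Ω)
    (d : Fin l → ℝ) (hd : ∀ i, d i = 1 ∨ d i = -1)
    (ρa : ℝ)
    (hρa : ρa = sInf (({x | ∃ i j, i ≠ j ∧ x = dist (a i) (a j) / 2} ∪
      {x | ∃ i, x = infDist (a i) Ωᶜ} ∪ {1}) : Set ℝ))
    (hsmall : W11norm Ω (fun φ => ∑ i, d i * (φ (a i) - φ (ξ i))) ≤ ρa / 4) :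
    ∃ σ : Equiv.Perm (Fin l),
      W11norm Ω (fun φ => ∑ i, d i * (φ (a i) - φ (ξ i))) =
        ∑ i, dist (a i) (ξ (σ i)) :=
  stmt0_general Ω hΩ a ξ ha haΩ d hd ρa hρa hsmall
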